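/- arXiv:2306.02225 — 5 statements merged into one kernel-verified Lean document; each statement's English description precedes it below -/
import Mathlib

section
/- Let n ≥ 1 and let π be a permutation of the interval [0, 4^n). For 0 ≤ i < 2^n, call the i-th sub-block the interval X_i = [i·2^n, (i+1)·2^n). Call a sub-block X_i 'big' if there exists s ∈ [1, 4^n] with |π(X_i) ∩ [0,s)| / s > 1/n. Then the number of big sub-blocks is at most n · H(2^n), where H(m) = ∑_{k=1}^{m} 1/k is the m-th harmonic number. -/
open Filter Topology Classical

/-- `cnt A n = |A ∩ [0,n)|`. -/
noncomputable def cnt (A : Set ℕ) (n : ℕ) : ℕ :=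
  ((Finset.range n).filter (· ∈ A)).card

/-- `dens A n = |A ∩ [0,n)| / n`, the density of `A` at `n`. -/
noncomputable def dens (A : Set ℕ) (n : ℕ) : ℝ := (cnt A n : ℝ) / n

/-- The `i`-th sub-block of `[0,4^n)`: the interval `[i·2^n, (i+1)·2^n)`. -/
def subBlock (n i : ℕ) : Finset ℕ := Finset.Ico (i * 2 ^ n) ((i + 1) * 2 ^ n)

/-- Sub-block `i` is big for `π` on `[0,4^n)`: some `s ∈ [1,4^n]` has
`|π(X_i) ∩ [0,s)| / s > 1/n`. -/
noncomputable def Big (n : ℕ) (π : ℕ → ℕ) (i : ℕ) : Prop :=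
  ∃ s, 1 ≤ s ∧ s ≤ 4 ^ n ∧
    (1 : ℝ) / n < (((subBlock n i).image π).filter (· < s)).card / s

/-!
For a big block `i` pick a witness `s_i` and put `F_i = π(X_i) ∩ [0, s_i)`, `c_i = |F_i|`.
Then `1 ≤ c_i ≤ 2^n` and `F_i ⊆ [0, n c_i)`; since the `F_i` are disjoint, the blocks with
`c_i ≤ m` satisfy `∑ c_i ≤ n m`. With `a_k` the number of big blocks with `c_i = k` this reads
`∑_{k ≤ m} k a_k ≤ n m` for all `m`, and Abel summation turns these bounds on partial sums into
`∑_k a_k ≤ n H(2^n)`.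
-/

open Finset

-- Abel summation for `a_k = (P_k - P_{k-1}) / k` with `P_m = ∑_{k ≤ m} k a_k`.
theorem sum_le_partial_sum_div_add {a : ℕ → ℝ} {K : ℝ}
    (h : ∀ m : ℕ, ∑ k ∈ Icc 1 m, k * a k ≤ K * m) {B : ℕ} (hB : 1 ≤ B) :
    ∑ k ∈ Icc 1 B, a k ≤
      (∑ k ∈ Icc 1 B, k * a k) / B + K * (∑ k ∈ Icc 1 B, (1 : ℝ) / k - 1) := by
  induction B, hB using Nat.le_induction with
  | base => simp
  | succ B hB ih =>
    rw [sum_Icc_succ_top (by omega), sum_Icc_succ_top (by omega), sum_Icc_succ_top (by omega)]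
    set P := ∑ k ∈ Icc 1 B, k * a k
    have hP : P / (B * (B + 1)) ≤ K / (B + 1) := by
      rw [div_le_div_iff₀ (by positivity) (by positivity)]
      nlinarith [h B]
    have hsplit : P / B = P / (B + 1) + P / (B * (B + 1)) := by field_simp
    have hlast : (P + (B + 1) * a (B + 1)) / (B + 1) = P / (B + 1) + a (B + 1) := by field_simp
    push_cast
    rw [hlast]
    linear_combination ih + hP + hsplit

theorem sum_le_mul_sum_inv_of_partial_sums_le {a : ℕ → ℝ} {K : ℝ}
    (h : ∀ m : ℕ, ∑ k ∈ Icc 1 m, k * a k ≤ K * m) (B : ℕ) :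
    ∑ k ∈ Icc 1 B, a k ≤ K * ∑ k ∈ Icc 1 B, (1 : ℝ) / k := by
  rcases Nat.eq_zero_or_pos B with rfl | hB
  · simp
  have hB0 : (0 : ℝ) < B := by exact_mod_cast hB
  have hPB : (∑ k ∈ Icc 1 B, k * a k) / B ≤ K := by
    rw [div_le_iff₀ hB0]; exact h B
  linarith [sum_le_partial_sum_div_add h hB]

theorem card_le_mul_sum_inv_of_sum_le {ι : Type*} {S : Finset ι} {c : ι → ℕ} {B : ℕ} {K : ℝ}
    (hc : ∀ i ∈ S, c i ∈ Icc 1 B) (h : ∀ m : ℕ, (∑ i ∈ S with c i ≤ m, c i : ℝ) ≤ K * m) :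
    (#S : ℝ) ≤ K * ∑ k ∈ Icc 1 B, (1 : ℝ) / k := by
  have hfiber (m : ℕ) :
      ∑ k ∈ Icc 1 m, (k : ℝ) * #{i ∈ S | c i = k} = ∑ i ∈ S with c i ≤ m, (c i : ℝ) := by
    rw [← sum_fiberwise_of_maps_to (g := c) (t := Icc 1 m) fun i hi => by grind]
    refine sum_congr rfl fun k hk => ?_
    have hfilter : {i ∈ {i ∈ S | c i ≤ m} | c i = k} = {i ∈ S | c i = k} := by
      ext i; simp only [mem_filter, mem_Icc] at hk ⊢; grind
    rw [hfilter, sum_eq_card_nsmul fun i hi => congrArg Nat.cast (mem_filter.1 hi).2, nsmul_eq_mul,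
      mul_comm]
  rw [card_eq_sum_card_fiberwise hc]
  push_cast
  exact sum_le_mul_sum_inv_of_partial_sums_le (fun m => (hfiber m).trans_le (h m)) B

theorem sum_card_le_of_pairwiseDisjoint {ι : Type*} {S : Finset ι} {F : ι → Finset ℕ}
    (hF : (S : Set ι).PairwiseDisjoint F) {K : ℕ} (hlt : ∀ i ∈ S, ∀ x ∈ F i, x < K * #(F i))
    (m : ℕ) : ∑ i ∈ S with #(F i) ≤ m, #(F i) ≤ K * m := by
  rw [← card_biUnion (hF.subset (coe_subset.2 (filter_subset _ _))), ← card_range (K * m)]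
  refine card_le_card fun x hx => ?_
  obtain ⟨i, hi, hx⟩ := mem_biUnion.1 hx
  obtain ⟨hiS, him⟩ := mem_filter.1 hi
  exact mem_range.2 ((hlt i hiS x hx).trans_le (Nat.mul_le_mul_left K him))

theorem card_le_mul_sum_inv_of_pairwiseDisjoint {ι : Type*} {S : Finset ι} {F : ι → Finset ℕ}
    (hF : (S : Set ι).PairwiseDisjoint F) {K B : ℕ} (hlt : ∀ i ∈ S, ∀ x ∈ F i, x < K * #(F i))
    (hne : ∀ i ∈ S, (F i).Nonempty) (hB : ∀ i ∈ S, #(F i) ≤ B) :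
    (#S : ℝ) ≤ K * ∑ k ∈ Icc 1 B, (1 : ℝ) / k :=
  card_le_mul_sum_inv_of_sum_le (c := fun i => #(F i))
    (fun i hi => mem_Icc.2 ⟨card_pos.2 (hne i hi), hB i hi⟩)
    (fun m => mod_cast sum_card_le_of_pairwiseDisjoint hF hlt m)

theorem card_subBlock (n i : ℕ) : #(subBlock n i) = 2 ^ n := by
  simp [subBlock, add_mul]

theorem div_eq_of_mem_subBlock {n i x : ℕ} (hx : x ∈ subBlock n i) : x / 2 ^ n = i :=
  Nat.div_eq_of_lt_le (mem_Ico.1 hx).1 (mem_Ico.1 hx).2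

theorem disjoint_subBlock (n : ℕ) {i j : ℕ} (hij : i ≠ j) :
    Disjoint (subBlock n i) (subBlock n j) :=
  disjoint_left.2 fun _ hi hj => hij ((div_eq_of_mem_subBlock hi).symm.trans
    (div_eq_of_mem_subBlock hj))

theorem coe_subBlock_subset {n i : ℕ} (hi : i < 2 ^ n) :
    (subBlock n i : Set ℕ) ⊆ Set.Ico 0 (4 ^ n) := by
  intro x hx
  have hx := (mem_Ico.1 hx).2
  have : (i + 1) * 2 ^ n ≤ 4 ^ n := by
    rw [show 4 = 2 * 2 by rfl, mul_pow]; exact Nat.mul_le_mul_right _ hi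
  exact ⟨Nat.zero_le x, hx.trans_le this⟩

theorem disjoint_image_subBlock {n : ℕ} {π : ℕ → ℕ} (hπ : Set.InjOn π (Set.Ico 0 (4 ^ n)))
    {i j : ℕ} (hi : i < 2 ^ n) (hj : j < 2 ^ n) (hij : i ≠ j) :
    Disjoint ((subBlock n i).image π) ((subBlock n j).image π) := by
  rw [← disjoint_coe, coe_image, coe_image]
  exact (disjoint_coe.2 (disjoint_subBlock n hij)).image hπ (coe_subBlock_subset hi)
    (coe_subBlock_subset hj)

theorem Big.exists_lt_mul_card {n : ℕ} {π : ℕ → ℕ} {i : ℕ} (hn : 1 ≤ n) (h : Big n π i) :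
    ∃ s, s < n * #{y ∈ (subBlock n i).image π | y < s} := by
  obtain ⟨s, hs, -, hdens⟩ := h
  refine ⟨s, ?_⟩
  have hn0 : (0 : ℝ) < n := by exact_mod_cast hn
  have hs0 : (0 : ℝ) < s := by exact_mod_cast hs
  rw [div_lt_div_iff₀ hn0 hs0, one_mul, mul_comm] at hdens
  exact_mod_cast hdens

theorem stmt3 (n : ℕ) (hn : 1 ≤ n) (π : ℕ → ℕ)
    (hπ : Set.BijOn π (Set.Ico 0 (4 ^ n)) (Set.Ico 0 (4 ^ n))) :
    (((Finset.range (2 ^ n)).filter (Big n π)).card : ℝ) ≤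
      n * ∑ k ∈ Finset.Icc (1:ℕ) (2 ^ n), (1 : ℝ) / (k:ℝ) := by
  choose! s hs using fun i (hi : i ∈ (range (2 ^ n)).filter (Big n π)) =>
    (mem_filter.1 hi).2.exists_lt_mul_card hn
  refine card_le_mul_sum_inv_of_pairwiseDisjoint
    (F := fun i => {y ∈ (subBlock n i).image π | y < s i}) ?_ ?_ ?_ ?_
  · intro i hi j hj hij
    exact disjoint_filter_filter (disjoint_image_subBlock hπ.injOn
      (mem_range.1 (mem_filter.1 hi).1) (mem_range.1 (mem_filter.1 hj).1) hij)
  · exact fun i hi x hx => (mem_filter.1 hx).2.trans (hs i hi)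
  · exact fun i hi => card_pos.1 (Nat.pos_of_mul_pos_left ((Nat.zero_le _).trans_lt (hs i hi)))
  · exact fun i _ => (card_filter_le _ _).trans (card_image_le.trans (card_subBlock n i).le)
end

section
/- For every k ≥ 1, if a sub-block X of [0,4^n) (under a permutation π of [0,4^n)) is k-big, meaning there is a minimal s with |π(X) ∩ [0,s)| = k and |π(X) ∩ [0,s)|/s > 1/n, then s < n·k; consequently at most n sub-blocks can be k-big. -/
open Filter Topology Classical

/-- `|π(X_i) ∩ [0,s)|` for the `i`-th sub-block. -/
def cntIm (π : ℕ → ℕ) (n i s : ℕ) : ℕ :=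
  (((subBlock n i).image π).filter (· < s)).card

/-- Sub-block `i` is `k`-big: there is a minimal `s` with `|π(X_i) ∩ [0,s)| = k`
and `|π(X_i) ∩ [0,s)|/s > 1/n`. -/
noncomputable def KBig (π : ℕ → ℕ) (n k i : ℕ) : Prop :=
  ∃ s, 1 ≤ s ∧ cntIm π n i s = k ∧ (1 : ℝ) / n < (k : ℝ) / s ∧
    ∀ t < s, ¬ (cntIm π n i t = k ∧ (1 : ℝ) / n < (cntIm π n i t : ℝ) / t)

theorem stmt4 (n k : ℕ) (hn : 1 ≤ n) (hk : 1 ≤ k) (π : ℕ → ℕ)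
    (hπ : Set.BijOn π (Set.Ico 0 (4 ^ n)) (Set.Ico 0 (4 ^ n))) :
    (∀ i < 2 ^ n, ∀ s, 1 ≤ s → cntIm π n i s = k → (1 : ℝ) / n < (k : ℝ) / s →
        s < n * k) ∧
      ((Finset.range (2 ^ n)).filter (KBig π n k)).card ≤ n := by
  have h1 : ∀ i < 2 ^ n, ∀ s, 1 ≤ s → cntIm π n i s = k → (1 : ℝ) / n < (k : ℝ) / s →
      s < n * k := by
    intro i _ s hs _ hlt
    have hn' : (0:ℝ) < n := by exact_mod_cast hn
    have hs' : (0:ℝ) < s := by exact_mod_cast hs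
    rw [div_lt_div_iff₀ hn' hs'] at hlt
    have : (s:ℝ) < (n:ℝ) * (k:ℝ) := by nlinarith
    exact_mod_cast this
  refine ⟨h1, ?_⟩
  set B := (Finset.range (2^n)).filter (KBig π n k) with hB
  set S : ℕ → Finset ℕ := fun i => ((subBlock n i).image π).filter (· < n*k) with hS
  have hblock : ∀ i < 2^n, ∀ x ∈ subBlock n i, x ∈ Set.Ico 0 (4^n) := by
    intro i hi x hx
    simp only [subBlock, Finset.mem_Ico] at hx
    refine ⟨Nat.zero_le _, ?_⟩
    have h4 : (4:ℕ)^n = 2^n * 2^n := by rw [← mul_pow]; norm_num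
    calc x < (i+1) * 2^n := hx.2
      _ ≤ 2^n * 2^n := Nat.mul_le_mul_right _ hi
      _ = 4^n := h4.symm
  have hdisjB : ∀ i ∈ B, ∀ j ∈ B, i ≠ j → Disjoint (S i) (S j) := by
    intro i hi j hj hij
    simp only [hB, Finset.mem_filter, Finset.mem_range] at hi hj
    rw [Finset.disjoint_left]
    intro x hxi hxj
    simp only [hS, Finset.mem_filter, Finset.mem_image] at hxi hxj
    obtain ⟨⟨a, ha, rfl⟩, -⟩ := hxi
    obtain ⟨⟨b, hb, hba⟩, -⟩ := hxj
    have hab : b = a := hπ.injOn (hblock j hj.1 b hb) (hblock i hi.1 a ha) hba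
    subst hab
    simp only [subBlock, Finset.mem_Ico] at ha hb
    have : b / 2^n = i := Nat.div_eq_of_lt_le ha.1 ha.2
    have h2 : b / 2^n = j := Nat.div_eq_of_lt_le hb.1 hb.2
    exact hij (by omega)
  have hcard : ∀ i ∈ B, k ≤ (S i).card := by
    intro i hi
    simp only [hB, Finset.mem_filter, Finset.mem_range] at hi
    obtain ⟨hi2, s, hs1, hcnt, hlt, -⟩ := hi
    have hsnk : s < n * k := h1 i hi2 s hs1 hcnt hlt
    have : ((subBlock n i).image π).filter (· < s) ⊆ S i := by
      intro x hx
      exact Finset.mem_filter.mpr ⟨(Finset.mem_filter.mp hx).1,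
        lt_of_lt_of_le (Finset.mem_filter.mp hx).2 hsnk.le⟩
    calc k = cntIm π n i s := hcnt.symm
      _ ≤ (S i).card := Finset.card_le_card this
  have hsum : B.card * k ≤ n * k := by
    calc B.card * k = ∑ i ∈ B, k := by rw [Finset.sum_const, smul_eq_mul]
      _ ≤ ∑ i ∈ B, (S i).card := Finset.sum_le_sum hcard
      _ = (B.biUnion S).card := (Finset.card_biUnion hdisjB).symm
      _ ≤ (Finset.range (n*k)).card := by
          apply Finset.card_le_card
          intro x hx
          simp only [Finset.mem_biUnion] at hx
          obtain ⟨i, -, hxi⟩ := hx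
          simp only [hS, Finset.mem_filter] at hxi
          exact Finset.mem_range.mpr hxi.2
      _ = n * k := Finset.card_range _
  exact Nat.le_of_mul_le_mul_right hsum hk
end

section
/- Let b_n = (4^n − 1)/3, and say A ⊆ ℕ 'contains the i-th sub-block of the n-th block' if [b_n + i·2^n, b_n + (i+1)·2^n) ⊆ A and A ∩ [b_n, b_{n+1}) equals exactly that sub-block. Suppose A contains exactly one sub-block of the n-th block for infinitely many n. Then there exists a selection function (skip rule) f such that the selected sequence f(A) has upper density at least 1/3; in particular, for each such n, at a suitable finite stage s ≤ 3·2^n − 2, the number of 1's selected so far is at least 2^n while the number of 0's selected so far is at most 2(2^n − 1), giving proportion ≥ 1/3. -/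
open Filter Topology Classical

/-- A skip rule: given the finite history of (door, content) pairs observed so far,
it picks the next door, which must exceed the last door visited. -/
structure SkipRule where
  next : List (ℕ × Bool) → ℕ
  incr : ∀ (σ : List (ℕ × Bool)) (p : ℕ × Bool), next (σ ++ [p]) > p.1

/-- The history of the first `n` inspections of `A` by skip rule `R`. -/
noncomputable def SkipRule.hist (R : SkipRule) (A : Set ℕ) : ℕ → List (ℕ × Bool)
  | 0 => []
  | n + 1 =>
      R.hist A n ++ [(R.next (R.hist A n), decide (R.next (R.hist A n) ∈ A))]

/-- The set of stages at which the bit selected by `R` from `A` is a `1`;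
its density is the density of `1`s in the selected bit sequence `R(A)`. -/
noncomputable def SkipRule.selSet (R : SkipRule) (A : Set ℕ) : Set ℕ :=
  {m | R.next (R.hist A m) ∈ A}

/-- `b n = (4^n - 1)/3`, the left endpoint of the `n`-th ordered block. -/
def blockStart (n : ℕ) : ℕ := (4 ^ n - 1) / 3

/-- `A` contains exactly one sub-block of the `n`-th ordered block:
`A ∩ [b_n, b_{n+1})` is exactly `[b_n + i·2^n, b_n + (i+1)·2^n)` for some `i < 2^n`. -/
def ContainsExactlyOneSubBlock (A : Set ℕ) (n : ℕ) : Prop :=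
  ∃ i < 2 ^ n, A ∩ Set.Ico (blockStart n) (blockStart (n + 1)) =
    Set.Ico (blockStart n + i * 2 ^ n) (blockStart n + (i + 1) * 2 ^ n)

/-! The skip rule reads, in block `n`, the first bit of each sub-block until it meets a `1`, then
reads on through that sub-block, leaving the block at its end or at the first `0` inside it. So
at most `2 ^ n` zeros are selected in block `n`, and fewer than `2 ^ n` before it. If block `n`
contains exactly its `i`-th sub-block, the rule next selects `i < 2 ^ n` zeros followed by
`2 ^ n` ones, and at that stage at least a third of the selected bits are ones. The rule needs
only the last door opened, and locating a door in its block is primitive recursive. -/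

lemma cnt_eq_count (S : Set ℕ) (n : ℕ) : cnt S n = Nat.count (· ∈ S) n :=
  (Nat.count_eq_card_filter_range _ n).symm

lemma le_limsup_dens_of_frequently {S : Set ℕ} {c : ℝ}
    (h : ∃ᶠ T in atTop, c * T ≤ cnt S T) : c ≤ limsup (dens S) atTop := by
  have hbdd : IsBoundedUnder (· ≤ ·) atTop (dens S) := by
    refine isBoundedUnder_of ⟨1, fun T => div_le_one_of_le₀ ?_ T.cast_nonneg⟩
    exact_mod_cast (cnt_eq_count S T).trans_le (Nat.count_le _)
  refine le_limsup_of_frequently_le ?_ hbdd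
  refine (h.and_eventually (eventually_gt_atTop 0)).mono fun T ⟨hT, hpos⟩ => ?_
  rw [dens, le_div_iff₀ (by exact_mod_cast hpos)]
  exact hT

lemma exists_apply_eq_of_strictMono {u : ℕ → ℕ} (hu : StrictMono u) {x : ℕ} (h0 : u 0 ≤ x)
    (hstep : ∀ s, u s < x → u (s + 1) ≤ x) : ∃ s, u s = x := by
  have hex : ∃ s, x ≤ u s := ⟨x, hu.id_le x⟩
  refine ⟨Nat.find hex, le_antisymm ?_ (Nat.find_spec hex)⟩
  rcases h : Nat.find hex with _ | s
  · exact h0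
  · exact hstep s (not_le.1 (Nat.find_min hex (by omega)))

namespace SkipRule

def ofStep (g : ℕ × Bool → ℕ) (hg : ∀ p, p.1 < g p) : SkipRule where
  next σ := σ.getLast?.elim 0 g
  incr σ p := by simpa using hg p

variable {g : ℕ × Bool → ℕ} {hg : ∀ p, p.1 < g p}

lemma ofStep_next_hist (A : Set ℕ) (m : ℕ) :
    (ofStep g hg).next ((ofStep g hg).hist A m) = (fun d => g (d, decide (d ∈ A)))^[m] 0 := by
  induction m with
  | zero => rfl
  | succ m ih =>
    rw [Function.iterate_succ_apply', ← ih]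
    simp [hist, ofStep]

lemma ofStep_selSet (A : Set ℕ) :
    (ofStep g hg).selSet A = {m | (fun d => g (d, decide (d ∈ A)))^[m] 0 ∈ A} := by
  simp only [selSet, ofStep_next_hist]

lemma computable_ofStep_next (hg' : Primrec g) : Computable (ofStep g hg).next := by
  refine (Primrec.option_casesOn (Primrec.list_head?.comp Primrec.list_reverse) (Primrec.const 0)
    (hg'.comp Primrec.snd).to₂).to_comp.of_eq fun σ => ?_
  rw [List.head?_reverse]
  simp only [ofStep]
  cases σ.getLast? <;> rfl

end SkipRule

lemma blockStart_succ (n : ℕ) : blockStart (n + 1) = blockStart n + 2 ^ n * 2 ^ n := by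
  have h : 4 ^ (n + 1) - 1 = 4 ^ n - 1 + 3 * (2 ^ n * 2 ^ n) := by
    rw [← mul_pow, pow_succ]
    have := Nat.one_le_pow n 4 (by norm_num)
    norm_num
    omega
  rw [blockStart, blockStart, h, Nat.add_mul_div_left _ _ (by norm_num)]

lemma blockStart_strictMono : StrictMono blockStart :=
  strictMono_nat_of_lt_succ fun n => by
    rw [blockStart_succ]
    have := Nat.two_pow_pos n
    nlinarith

def blockIndex (d : ℕ) : ℕ := Nat.findGreatest (fun k => blockStart k ≤ d) d

lemma blockStart_blockIndex_le (d : ℕ) : blockStart (blockIndex d) ≤ d :=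
  Nat.findGreatest_spec (P := fun k => blockStart k ≤ d) (Nat.zero_le d) (Nat.zero_le d)

lemma lt_blockStart_blockIndex_succ (d : ℕ) : d < blockStart (blockIndex d + 1) := by
  by_contra! h
  have hle : blockIndex d + 1 ≤ d := (blockStart_strictMono.id_le _).trans h
  exact Nat.findGreatest_is_greatest (Nat.lt_succ_self _) hle h

lemma blockIndex_eq {d n : ℕ} (h₁ : blockStart n ≤ d) (h₂ : d < blockStart (n + 1)) :
    blockIndex d = n := by
  have := blockStart_strictMono.lt_iff_lt.1 (h₁.trans_lt (lt_blockStart_blockIndex_succ d))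
  have := blockStart_strictMono.lt_iff_lt.1 ((blockStart_blockIndex_le d).trans_lt h₂)
  omega

lemma lt_blockStart_succ {n i j : ℕ} (hi : i < 2 ^ n) (hj : j < 2 ^ n) :
    blockStart n + i * 2 ^ n + j < blockStart (n + 1) := by
  rw [blockStart_succ]
  nlinarith

lemma blockIndex_coords {n i j : ℕ} (hi : i < 2 ^ n) (hj : j < 2 ^ n) :
    blockIndex (blockStart n + i * 2 ^ n + j) = n :=
  blockIndex_eq (by omega) (lt_blockStart_succ hi hj)

lemma exists_coords (d : ℕ) :
    ∃ n i j, i < 2 ^ n ∧ j < 2 ^ n ∧ d = blockStart n + i * 2 ^ n + j := by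
  have h₁ := blockStart_blockIndex_le d
  have h₂ := lt_blockStart_blockIndex_succ d
  generalize blockIndex d = n at h₁ h₂
  rw [blockStart_succ] at h₂
  refine ⟨n, (d - blockStart n) / 2 ^ n, (d - blockStart n) % 2 ^ n,
    Nat.div_lt_of_lt_mul (by omega), Nat.mod_lt _ (Nat.two_pow_pos n), ?_⟩
  have := Nat.div_add_mod' (d - blockStart n) (2 ^ n)
  omega

lemma coords_eq_blockStart {n m i j : ℕ} (hi : i < 2 ^ n) (hj : j < 2 ^ n)
    (h : blockStart n + i * 2 ^ n + j = blockStart m) : n = m ∧ i = 0 := by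
  obtain rfl : n = m := by
    rw [← blockIndex_coords hi hj, h]
    simpa using blockIndex_coords (i := 0) (j := 0) (Nat.two_pow_pos m) (Nat.two_pow_pos m)
  refine ⟨rfl, ?_⟩
  have : i * 2 ^ n = 0 := by omega
  simpa [pow_ne_zero] using this

lemma mem_coords_iff_of_inter_eq {A : Set ℕ} {n i k j : ℕ}
    (hset : A ∩ Set.Ico (blockStart n) (blockStart (n + 1)) =
      Set.Ico (blockStart n + i * 2 ^ n) (blockStart n + (i + 1) * 2 ^ n))
    (hk : k < 2 ^ n) (hj : j < 2 ^ n) : blockStart n + k * 2 ^ n + j ∈ A ↔ k = i := by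
  have hin := lt_blockStart_succ hk hj
  have h := congrArg (blockStart n + k * 2 ^ n + j ∈ ·) hset
  simp only [Set.mem_inter_iff, Set.mem_Ico, eq_iff_iff] at h
  constructor
  · intro hA
    obtain ⟨h₁, h₂⟩ := h.1 ⟨hA, by omega, hin⟩
    have : k < i + 1 := lt_of_mul_lt_mul_right (a := 2 ^ n) (by omega) (Nat.zero_le _)
    have : i < k + 1 := lt_of_mul_lt_mul_right (a := 2 ^ n) (by rw [add_mul]; omega)
      (Nat.zero_le _)
    omega
  · rintro rfl
    exact (h.2 ⟨by omega, by rw [add_mul]; omega⟩).1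

def nextDoor (p : ℕ × Bool) : ℕ :=
  let n := blockIndex p.1
  let j := (p.1 - blockStart n) % 2 ^ n
  bif p.2 then (if j + 1 < 2 ^ n then p.1 + 1 else blockStart (n + 1))
  else (if j = 0 then p.1 + 2 ^ n else blockStart (n + 1))

section Coords

variable {n i j : ℕ} (hi : i < 2 ^ n) (hj : j < 2 ^ n)
include hi hj

lemma nextDoor_coords (b : Bool) :
    nextDoor (blockStart n + i * 2 ^ n + j, b) =
      bif b then (if j + 1 < 2 ^ n then blockStart n + i * 2 ^ n + j + 1 else blockStart (n + 1))
      else (if j = 0 then blockStart n + i * 2 ^ n + j + 2 ^ n else blockStart (n + 1)) := by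
  have hj' : (blockStart n + i * 2 ^ n + j - blockStart n) % 2 ^ n = j := by
    rw [add_assoc, Nat.add_sub_cancel_left, Nat.mul_comm, Nat.mul_add_mod, Nat.mod_eq_of_lt hj]
  simp only [nextDoor, blockIndex_coords hi hj, hj']

lemma nextDoor_coords_true :
    nextDoor (blockStart n + i * 2 ^ n + j, true) =
      if j + 1 < 2 ^ n then blockStart n + i * 2 ^ n + (j + 1) else blockStart (n + 1) := by
  rw [nextDoor_coords hi hj, cond_true, add_assoc _ j]

lemma nextDoor_coords_false :
    nextDoor (blockStart n + i * 2 ^ n + j, false) =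
      if j = 0 ∧ i + 1 < 2 ^ n then blockStart n + (i + 1) * 2 ^ n + 0
      else blockStart (n + 1) := by
  rw [nextDoor_coords hi hj, cond_false]
  rcases eq_or_ne j 0 with rfl | hj0
  · rcases lt_or_eq_of_le (Nat.succ_le_of_lt hi) with hi' | hi'
    · simp [hi', add_mul, add_assoc]
    · simp [← hi', blockStart_succ, add_mul, add_assoc]
  · simp [hj0]

lemma nextDoor_coords_le (b : Bool) :
    nextDoor (blockStart n + i * 2 ^ n + j, b) ≤ blockStart (n + 1) := by
  cases b
  · rw [nextDoor_coords_false hi hj]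
    split_ifs with h
    · exact (lt_blockStart_succ h.2 (Nat.two_pow_pos n)).le
    · rfl
  · rw [nextDoor_coords_true hi hj]
    split_ifs with h
    · exact (lt_blockStart_succ hi h).le
    · rfl

end Coords

lemma lt_nextDoor (p : ℕ × Bool) : p.1 < nextDoor p := by
  obtain ⟨d, b⟩ := p
  have := Nat.two_pow_pos (blockIndex d)
  have := lt_blockStart_blockIndex_succ d
  cases b <;> simp only [nextDoor] <;> split_ifs <;> simp <;> omega

lemma primrec_nextDoor : Primrec nextDoor := by
  have hpow : Primrec₂ ((· ^ ·) : ℕ → ℕ → ℕ) := Primrec₂.unpaired'.1 Nat.Primrec.pow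
  have hstart : Primrec blockStart :=
    Primrec.nat_div.comp (Primrec.nat_sub.comp (hpow.comp (Primrec.const 4) Primrec.id)
      (Primrec.const 1)) (Primrec.const 3)
  have hindex : Primrec blockIndex :=
    Primrec.nat_findGreatest Primrec.id (Primrec.nat_le.comp (hstart.comp Primrec.snd) Primrec.fst)
  have hn : Primrec fun p : ℕ × Bool => blockIndex p.1 := hindex.comp Primrec.fst
  have hsize : Primrec fun p : ℕ × Bool => 2 ^ blockIndex p.1 := hpow.comp (Primrec.const 2) hn
  have hnext : Primrec fun p : ℕ × Bool => blockStart (blockIndex p.1 + 1) :=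
    hstart.comp (Primrec.succ.comp hn)
  have hj : Primrec fun p : ℕ × Bool => (p.1 - blockStart (blockIndex p.1)) % 2 ^ blockIndex p.1 :=
    Primrec.nat_mod.comp (Primrec.nat_sub.comp Primrec.fst (hstart.comp hn)) hsize
  exact Primrec.cond Primrec.snd
    (Primrec.ite (Primrec.nat_lt.comp (Primrec.succ.comp hj) hsize)
      (Primrec.succ.comp Primrec.fst) hnext)
    (Primrec.ite (Primrec.eq.comp hj (Primrec.const 0))
      (Primrec.nat_add.comp Primrec.fst hsize) hnext)

def blockRule : SkipRule := SkipRule.ofStep nextDoor lt_nextDoor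

noncomputable def door (A : Set ℕ) (s : ℕ) : ℕ := (fun d => nextDoor (d, decide (d ∈ A)))^[s] 0

noncomputable def ones (A : Set ℕ) (s : ℕ) : ℕ := Nat.count (fun m => door A m ∈ A) s

section Door

variable {A : Set ℕ}

lemma door_succ (s : ℕ) : door A (s + 1) = nextDoor (door A s, decide (door A s ∈ A)) :=
  Function.iterate_succ_apply' _ s 0

lemma door_strictMono : StrictMono (door A) :=
  strictMono_nat_of_lt_succ fun s => door_succ (A := A) s ▸ lt_nextDoor (door A s, _)

lemma cnt_selSet_blockRule (s : ℕ) : cnt (blockRule.selSet A) s = ones A s := by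
  rw [blockRule, SkipRule.ofStep_selSet, cnt_eq_count]
  rfl

/-- `s - ones A s` counts the zeros selected so far: fewer than `2 ^ n` before block `n`, then
one at the first bit of each of the sub-blocks `0, …, i - 1`. -/
lemma exists_coords_door (s : ℕ) : ∃ n i j, i < 2 ^ n ∧ j < 2 ^ n ∧
    door A s = blockStart n + i * 2 ^ n + j ∧ s - ones A s < 2 ^ n + i := by
  induction s with
  | zero => exact ⟨0, 0, 0, by simp [door, blockStart, ones]⟩
  | succ s ih =>
    obtain ⟨n, i, j, hi, hj, hd, hz⟩ := ih
    have hnext : blockStart (n + 1) = blockStart (n + 1) + 0 * 2 ^ (n + 1) + 0 := by simp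
    rw [door_succ, hd, ones, Nat.count_succ, ← ones, ← hd]
    by_cases hA : door A s ∈ A
    · rw [decide_eq_true hA, if_pos hA, hd, nextDoor_coords_true hi hj]
      split_ifs with hj'
      · exact ⟨n, i, j + 1, hi, hj', rfl, by omega⟩
      · exact ⟨n + 1, 0, 0, by positivity, by positivity, hnext, by omega⟩
    · rw [decide_eq_false hA, if_neg hA, hd, nextDoor_coords_false hi hj]
      split_ifs with hij
      · exact ⟨n, i + 1, 0, hij.2, Nat.two_pow_pos n, rfl, by omega⟩
      · exact ⟨n + 1, 0, 0, by positivity, by positivity, hnext, by omega⟩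

lemma sub_ones_lt_of_door_eq {s n : ℕ} (h : door A s = blockStart n) : s - ones A s < 2 ^ n := by
  obtain ⟨m, i, j, hi, hj, hd, hz⟩ := exists_coords_door (A := A) s
  obtain ⟨rfl, rfl⟩ := coords_eq_blockStart hi hj (hd.symm.trans h)
  simpa using hz

lemma exists_door_eq_blockStart (n : ℕ) : ∃ s, door A s = blockStart n := by
  refine exists_apply_eq_of_strictMono door_strictMono (Nat.zero_le _) fun s hs => ?_
  obtain ⟨m, i, j, hi, hj, hd⟩ := exists_coords (door A s)
  have hm : m < n := blockStart_strictMono.lt_iff_lt.1 (by omega)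
  calc door A (s + 1) ≤ blockStart (m + 1) := by rw [door_succ, hd]; exact nextDoor_coords_le hi hj _
    _ ≤ blockStart n := blockStart_strictMono.monotone hm

variable {s n i : ℕ}

lemma door_add_of_first_bits_not_mem (hi : i < 2 ^ n) (hs : door A s = blockStart n)
    (hA : ∀ k < i, blockStart n + k * 2 ^ n + 0 ∉ A) :
    ∀ k ≤ i, door A (s + k) = blockStart n + k * 2 ^ n + 0 := by
  intro k hk
  induction k with
  | zero => simpa using hs
  | succ k ih =>
    rw [← add_assoc, door_succ, ih (by omega), decide_eq_false (hA k (by omega)),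
      nextDoor_coords_false (by omega) (Nat.two_pow_pos n), if_pos ⟨rfl, by omega⟩]

lemma door_add_of_subBlock_mem (hi : i < 2 ^ n) (hs : door A s = blockStart n + i * 2 ^ n + 0)
    (hA : ∀ j < 2 ^ n, blockStart n + i * 2 ^ n + j ∈ A) :
    ∀ j < 2 ^ n, door A (s + j) = blockStart n + i * 2 ^ n + j := by
  intro j hj
  induction j with
  | zero => exact hs
  | succ j ih =>
    rw [← add_assoc, door_succ, ih (by omega), decide_eq_true (hA j (by omega)),
      nextDoor_coords_true hi (by omega), if_pos hj]

end Door

lemma ContainsExactlyOneSubBlock.exists_le_three_mul_ones {A : Set ℕ} {n : ℕ}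
    (hA : ContainsExactlyOneSubBlock A n) : ∃ T, 2 ^ n ≤ T ∧ T ≤ 3 * ones A T := by
  obtain ⟨i, hi, hset⟩ := hA
  obtain ⟨s, hs⟩ := exists_door_eq_blockStart (A := A) n
  have hpos := Nat.two_pow_pos n
  have hmem {k j : ℕ} (hk : k < 2 ^ n) (hj : j < 2 ^ n) := mem_coords_iff_of_inter_eq hset hk hj
  have hskip := door_add_of_first_bits_not_mem hi hs fun k hk => by rw [hmem (by omega) hpos]; omega
  have hread := door_add_of_subBlock_mem hi (hskip i le_rfl) fun j hj => (hmem hi hj).2 rfl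
  have hones_skip : ones A (s + i) = ones A s := by
    have : Nat.count (fun k => door A (s + k) ∈ A) i = 0 := Nat.count_of_forall_not fun k hk => by
      rw [hskip k hk.le, hmem (by omega) hpos]
      omega
    rw [ones, Nat.count_add, this, add_zero, ones]
  have hones_read : ones A (s + i + 2 ^ n) = ones A (s + i) + 2 ^ n := by
    have : Nat.count (fun j => door A (s + i + j) ∈ A) (2 ^ n) = 2 ^ n :=
      Nat.count_of_forall fun j hj => by rw [hread j hj, hmem hi hj]
    rw [ones, Nat.count_add, this, ones]
  have hzeros := sub_ones_lt_of_door_eq hs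
  exact ⟨s + i + 2 ^ n, by omega, by omega⟩

theorem stmt7 (A : Set ℕ)
    (hA : {n | ContainsExactlyOneSubBlock A n}.Infinite) :
    ∃ R : SkipRule, Computable R.next ∧
      (1 : ℝ) / 3 ≤ limsup (dens (R.selSet A)) atTop := by
  refine ⟨blockRule, SkipRule.computable_ofStep_next primrec_nextDoor,
    le_limsup_dens_of_frequently (frequently_atTop.2 fun N => ?_)⟩
  obtain ⟨n, hn, hNn⟩ := hA.exists_gt N
  obtain ⟨T, hnT, hT⟩ := ContainsExactlyOneSubBlock.exists_le_three_mul_ones hn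
  refine ⟨T, (hNn.trans Nat.lt_two_pow_self).le.trans hnT, ?_⟩
  rw [cnt_selSet_blockRule]
  have : (T : ℝ) ≤ 3 * ones A T := by exact_mod_cast hT
  linarith
end

section
/- Lemma (transfer of non-intrinsic-smallness): Suppose X has computable density 0 but is not intrinsically small, witnessed by a permutation π with limsup ρ_n(π(X)) > q > 0. Let Y be any set with computable density α. If π(Y \ X) has asymptotic density α, then limsup ρ_n(π(Y ∪ X)) ≥ α + q/2; hence π(Y ∪ X) does not have asymptotic density α, so Y ∪ X does not have intrinsic density α. -/
open Filter Topology Classical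

lemma cnt_union_of_disjoint {A B : Set ℕ} (h : Disjoint A B) (n : ℕ) :
    cnt (A ∪ B) n = cnt A n + cnt B n := by
  classical
  unfold cnt
  simp only [Set.mem_union]
  rw [Finset.filter_or, Finset.card_union_of_disjoint]
  refine Finset.disjoint_left.mpr fun a ha hb => ?_
  simp only [Finset.mem_filter] at ha hb
  exact Set.disjoint_left.mp h ha.2 hb.2

lemma dens_nonneg (A : Set ℕ) (n : ℕ) : 0 ≤ dens A n :=
  div_nonneg (Nat.cast_nonneg _) (Nat.cast_nonneg _)

lemma dens_le_one (A : Set ℕ) (n : ℕ) : dens A n ≤ 1 := by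
  unfold dens cnt
  rcases Nat.eq_zero_or_pos n with h | h
  · simp [h]
  · rw [div_le_one (by exact_mod_cast h)]
    exact_mod_cast (Finset.card_filter_le _ _).trans (by simp)

lemma dens_union_of_disjoint {A B : Set ℕ} (h : Disjoint A B) (n : ℕ) :
    dens (A ∪ B) n = dens A n + dens B n := by
  unfold dens
  rw [cnt_union_of_disjoint h, Nat.cast_add, add_div]

/-- `A` has computable density `α`: every total computable strictly increasing
`f : ℕ → ℕ` pulls `A` back to a set of density `α`. -/
def CompDensity (A : Set ℕ) (α : ℝ) : Prop :=
  ∀ f : ℕ → ℕ, Computable f → StrictMono f →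
    Tendsto (dens {n | f n ∈ A}) atTop (𝓝 α)

/-- `A` has intrinsic density `α`: `π(A)` has density `α` for every
computable permutation `π` of `ℕ`. -/
def IntrinsicDensity (A : Set ℕ) (α : ℝ) : Prop :=
  ∀ π : ℕ ≃ ℕ, Computable ⇑π → Tendsto (dens (⇑π '' A)) atTop (𝓝 α)

theorem stmt12 (X Y : Set ℕ) (α q : ℝ) (π : ℕ ≃ ℕ)
    (hπ : Computable ⇑π)
    (hX : CompDensity X 0)
    (hq : 0 < q) (hwit : q < limsup (dens (⇑π '' X)) atTop)
    (hY : CompDensity Y α)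
    (hYX : Tendsto (dens (⇑π '' (Y \ X))) atTop (𝓝 α)) :
    α + q / 2 ≤ limsup (dens (⇑π '' (Y ∪ X))) atTop ∧
      ¬ Tendsto (dens (⇑π '' (Y ∪ X))) atTop (𝓝 α) ∧
      ¬ IntrinsicDensity (Y ∪ X) α := by
  have himg : ⇑π '' (Y ∪ X) = (⇑π '' (Y \ X)) ∪ (⇑π '' X) := by
    rw [← Set.image_union]
    congr 1
    ext x
    by_cases hx : x ∈ X <;> simp [hx]
  have hdisj : Disjoint (⇑π '' (Y \ X)) (⇑π '' X) :=
    (Set.disjoint_image_iff π.injective).mpr Set.disjoint_sdiff_left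
  have hsum : ∀ n, dens (⇑π '' (Y ∪ X)) n
      = dens (⇑π '' (Y \ X)) n + dens (⇑π '' X) n := by
    intro n; rw [himg, dens_union_of_disjoint hdisj]
  have hbdge : IsBoundedUnder (· ≥ ·) atTop (dens (⇑π '' X)) :=
    ⟨0, Filter.eventually_map.mpr (Filter.Eventually.of_forall fun n => dens_nonneg _ n)⟩
  have hcob : IsCoboundedUnder (· ≤ ·) atTop (dens (⇑π '' X)) :=
    hbdge.isCoboundedUnder_le
  have hfreq : ∃ᶠ n in atTop, q < dens (⇑π '' X) n :=
    frequently_lt_of_lt_limsup hcob hwit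
  have hev : ∀ᶠ n in atTop, α - q / 2 ≤ dens (⇑π '' (Y \ X)) n := by
    have := hYX (Ioi_mem_nhds (show α - q/2 < α by linarith))
    filter_upwards [this] with n hn using le_of_lt hn
  have hfreq2 : ∃ᶠ n in atTop, α + q / 2 ≤ dens (⇑π '' (Y ∪ X)) n := by
    refine (hfreq.and_eventually hev).mono fun n ⟨h1, h2⟩ => ?_
    rw [hsum n]; linarith
  have hbd : IsBoundedUnder (· ≤ ·) atTop (dens (⇑π '' (Y ∪ X))) :=
    ⟨1, Filter.eventually_map.mpr (Filter.Eventually.of_forall fun n => dens_le_one _ n)⟩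
  have h1 : α + q / 2 ≤ limsup (dens (⇑π '' (Y ∪ X))) atTop :=
    le_limsup_of_frequently_le hfreq2 hbd
  have h2 : ¬ Tendsto (dens (⇑π '' (Y ∪ X))) atTop (𝓝 α) := by
    intro ht
    have := ht.limsup_eq
    rw [this] at h1
    linarith
  exact ⟨h1, h2, fun hI => h2 (hI π hπ)⟩
end

section
/- Let A ⊆ ℕ be infinite and f : ℕ → ℕ strictly increasing. Suppose for every s there exists t' such that for all t > t', the interval (a_t, a_{t+1}] between consecutive elements a_t < a_{t+1} of A contains at least s elements of the image of f. Then the image set f⁻¹(A) has asymptotic density 0, i.e., |{k < m : f(k) ∈ A}|/m → 0. -/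
open Filter Topology Classical

/-!
Let `a_t` enumerate `A` and let `N x` be the number of values of `f` below `x`, so that
`N (f m) = m`. Beyond `t'` every gap `(a_t, a_{t+1}]` holds at least `s` values of `f`, so
`N (a_t + 1)` grows by at least `s` with each step of `t`. Hence the number `n` of elements of `A`
below `f m` satisfies `s (n - t' - 2) ≤ m`, while the `k < m` with `f k ∈ A` number at most `n`.
So the density of `f⁻¹ A` is eventually at most about `1 / s`, for every `s`.
-/

namespace Nat

open Finset

variable {p q : ℕ → Prop} [DecidablePred p] [DecidablePred q]

theorem count_range_apply_of_strictMono {f : ℕ → ℕ} (hf : StrictMono f) (m : ℕ) :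
    count (· ∈ Set.range f) (f m) = m := by
  have himage : {y ∈ range (f m) | y ∈ Set.range f} = (range m).image f := by
    ext y
    simp only [mem_filter, mem_range, Set.mem_range, mem_image]
    constructor
    · rintro ⟨hy, k, rfl⟩
      exact ⟨k, hf.lt_iff_lt.1 hy, rfl⟩
    · rintro ⟨k, hk, rfl⟩
      exact ⟨hf hk, k, rfl⟩
  rw [count_eq_card_filter_range, himage, Finset.card_image_of_injective _ hf.injective, card_range]

theorem count_succ_add_card_filter_Ioc {x y : ℕ} (hxy : x ≤ y) :
    count q (x + 1) + #{z ∈ Ioc x y | q z} = count q (y + 1) := by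
  have hsplit : range (y + 1) = range (x + 1) ∪ Ioc x y := by
    ext z; simp only [mem_union, mem_range, mem_Ioc]; omega
  have hdisj : Disjoint (range (x + 1)) (Ioc x y) := by
    rw [disjoint_left]; intro z; simp only [mem_range, mem_Ioc]; omega
  rw [count_eq_card_filter_range, count_eq_card_filter_range, hsplit, filter_union,
    card_union_of_disjoint (disjoint_filter_filter hdisj)]

theorem add_mul_le_of_forall_add_le_succ {g : ℕ → ℕ} {s t₀ : ℕ}
    (h : ∀ t ≥ t₀, g t + s ≤ g (t + 1)) (j : ℕ) : g t₀ + s * j ≤ g (t₀ + j) := by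
  induction j with
  | zero => simp
  | succ j ih =>
    have := h (t₀ + j) (le_add_right t₀ j)
    rw [mul_add_one, ← add_assoc t₀]
    omega

theorem mul_count_le_of_forall_le_card_gap (hp : (Set.ofPred p).Infinite) {s t₀ : ℕ}
    (h : ∀ t ≥ t₀, s ≤ #{z ∈ Ioc (nth p t) (nth p (t + 1)) | q z}) (x : ℕ) :
    s * count p x ≤ s * (t₀ + 1) + count q x := by
  have hg : ∀ t ≥ t₀, count q (nth p t + 1) + s ≤ count q (nth p (t + 1) + 1) := fun t ht ↦ by
    rw [← count_succ_add_card_filter_Ioc (nth_monotone hp (le_add_right t 1))]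
    exact Nat.add_le_add_left (h t ht) _
  set n := count p x
  rcases le_or_gt n (t₀ + 1) with hn | hn
  · exact le_add_right_of_le (Nat.mul_le_mul_left s hn)
  have hlast : count q (nth p (n - 1) + 1) ≤ count q x :=
    count_monotone q (nth_lt_of_lt_count (by omega : n - 1 < count p x))
  have hgrowth := add_mul_le_of_forall_add_le_succ hg (n - 1 - t₀)
  rw [show t₀ + (n - 1 - t₀) = n - 1 by omega] at hgrowth
  calc s * n = s * (t₀ + 1) + s * (n - 1 - t₀) := by rw [← mul_add]; congr 1; omega
    _ ≤ s * (t₀ + 1) + count q x := by omega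

end Nat

theorem cnt_preimage_le_count {f : ℕ → ℕ} (hf : StrictMono f) (A : Set ℕ) (m : ℕ) :
    cnt (f ⁻¹' A) m ≤ Nat.count (· ∈ A) (f m) := by
  rw [cnt, Nat.count_eq_card_filter_range]
  refine Finset.card_le_card_of_injOn f (fun k hk ↦ ?_) hf.injective.injOn
  simp only [Finset.coe_filter, Finset.mem_range, Set.mem_ofPred_eq, Set.mem_preimage] at hk ⊢
  exact ⟨hf hk.1, hk.2⟩

theorem tendsto_dens_zero_of_forall_mul_cnt_le {B : Set ℕ}
    (h : ∀ s : ℕ, ∃ C : ℕ, ∀ m, s * cnt B m ≤ C + m) : Tendsto (dens B) atTop (𝓝 0) := by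
  refine tendsto_order.2 ⟨fun a ha ↦ Eventually.of_forall fun m ↦
    ha.trans_le (by unfold dens; positivity), fun ε hε ↦ ?_⟩
  obtain ⟨s, hs⟩ := exists_nat_gt (1 / ε)
  have hs0 : (0 : ℝ) < s := (one_div_pos.2 hε).trans hs
  obtain ⟨C, hC⟩ := h s
  have hlim : Tendsto (fun m : ℕ ↦ (C / s : ℝ) / m + 1 / s) atTop (𝓝 (1 / s)) := by
    simpa using (tendsto_const_div_atTop_nhds_zero_nat (C / s : ℝ)).add_const (1 / s : ℝ)
  have h1s : (1 / s : ℝ) < ε := by rwa [div_lt_iff₀ hs0, mul_comm, ← div_lt_iff₀ hε]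
  filter_upwards [hlim.eventually_lt_const h1s, eventually_gt_atTop 0] with m hm hm0
  refine lt_of_le_of_lt ?_ hm
  have hcnt : (s : ℝ) * cnt B m ≤ C + m := by exact_mod_cast hC m
  have hm0' : (0 : ℝ) < m := by exact_mod_cast hm0
  have hbound : (C / s / m + 1 / s : ℝ) = (C + m) / (s * m) := by field_simp
  rw [dens, hbound, div_le_div_iff₀ hm0' (by positivity)]
  nlinarith

theorem stmt15 (A : Set ℕ) (hA : A.Infinite) (f : ℕ → ℕ) (hf : StrictMono f)
    (hyp : ∀ s : ℕ, ∃ t' : ℕ, ∀ t > t',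
      s ≤ ((Finset.Ioc (Nat.nth (· ∈ A) t) (Nat.nth (· ∈ A) (t + 1))).filter
            (· ∈ Set.range f)).card) :
    Tendsto (dens {k | f k ∈ A}) atTop (𝓝 0) := by
  refine tendsto_dens_zero_of_forall_mul_cnt_le fun s ↦ ?_
  obtain ⟨t', ht'⟩ := hyp s
  refine ⟨s * (t' + 2), fun m ↦ ?_⟩
  calc s * cnt {k | f k ∈ A} m ≤ s * Nat.count (· ∈ A) (f m) :=
        Nat.mul_le_mul_left s (cnt_preimage_le_count hf A m)
    _ ≤ s * (t' + 2) + Nat.count (· ∈ Set.range f) (f m) :=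
        Nat.mul_count_le_of_forall_le_card_gap (p := (· ∈ A)) hA ht' (f m)
    _ = s * (t' + 2) + m := by rw [Nat.count_range_apply_of_strictMono hf]
end
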